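/- Let $(h(N))_N$ be a sequence of nonzero reals with $h(N) \to 0$ and $|h(N)| \cdot N \to \infty$ as $N \to \infty$. Then for every nonzero real $\alpha$, $\lim_{N\to\infty} \frac{1}{N}\sum_{n=0}^{N-1} e^{i \alpha h(N) n} = 0$. -/

import Mathlib

open Filter Finset Real

/-! For `0 < |θ| ≤ π` the geometric series gives
`‖∑_{n<N} e^{iθn}‖ = ‖e^{iθN} - 1‖ / ‖e^{iθ} - 1‖ ≤ 2 / ‖e^{iθ} - 1‖ ≤ π / |θ|`, the last step by
Jordan's inequality `|sin x| ≥ 2|x|/π` on `[-π/2, π/2]`. With `θ = α h(N)`, which eventually lies in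
`[-π, π]` since `h(N) → 0`, the averages are at most `π / (|α| |h(N)| N) → 0`. -/

lemma norm_geom_sum_le_of_norm_le_one {K : Type*} [NormedDivisionRing K] {z : K}
    (hz : ‖z‖ ≤ 1) (hz1 : z ≠ 1) (N : ℕ) :
    ‖∑ n ∈ range N, z ^ n‖ ≤ 2 / ‖z - 1‖ := by
  rw [geom_sum_eq hz1, norm_div]
  gcongr
  calc ‖z ^ N - 1‖ ≤ ‖z ^ N‖ + ‖(1 : K)‖ := norm_sub_le _ _
    _ ≤ 1 + 1 := by
      rw [norm_pow, norm_one]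
      gcongr
      exact pow_le_one₀ (norm_nonneg z) hz
    _ = 2 := one_add_one_eq_two

lemma mul_abs_le_norm_exp_I_mul_ofReal_sub_one {θ : ℝ} (hθ : |θ| ≤ π) :
    2 / π * |θ| ≤ ‖Complex.exp (Complex.I * θ) - 1‖ := by
  have hθ2 : |θ / 2| ≤ π / 2 := by
    rw [abs_div, abs_two]
    linarith
  rw [Complex.norm_exp_I_mul_ofReal_sub_one, norm_mul, Real.norm_eq_abs, Real.norm_eq_abs,
    abs_two]
  calc 2 / π * |θ| = 2 * (2 / π * |θ / 2|) := by
        rw [abs_div, abs_two]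
        ring
    _ ≤ 2 * |sin (θ / 2)| := by gcongr; exact mul_abs_le_abs_sin hθ2

lemma norm_sum_range_exp_I_mul_le {θ : ℝ} (hθ0 : θ ≠ 0) (hθ : |θ| ≤ π) (N : ℕ) :
    ‖∑ n ∈ range N, Complex.exp (Complex.I * ((θ * n : ℝ) : ℂ))‖ ≤ π / |θ| := by
  set z := Complex.exp (Complex.I * θ)
  have hjordan : 2 / π * |θ| ≤ ‖z - 1‖ := mul_abs_le_norm_exp_I_mul_ofReal_sub_one hθ
  have hlower : 0 < 2 / π * |θ| := by positivity
  have hz1 : z ≠ 1 := by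
    intro h
    rw [h, sub_self, norm_zero] at hjordan
    linarith
  have hpow : ∀ n : ℕ, Complex.exp (Complex.I * ((θ * n : ℝ) : ℂ)) = z ^ n := by
    intro n
    rw [← Complex.exp_nat_mul]
    push_cast
    ring_nf
  simp only [hpow]
  calc ‖∑ n ∈ range N, z ^ n‖ ≤ 2 / ‖z - 1‖ :=
        norm_geom_sum_le_of_norm_le_one (Complex.norm_exp_I_mul_ofReal θ).le hz1 N
    _ ≤ 2 / (2 / π * |θ|) := by gcongr
    _ = π / |θ| := by field_simp

theorem stmt2_general (h : ℕ → ℝ)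
    (h0 : Tendsto h atTop (nhds 0))
    (hinf : Tendsto (fun N : ℕ => |h N| * N) atTop atTop)
    (α : ℝ) (hα : α ≠ 0) :
    Tendsto (fun N : ℕ => (N : ℂ)⁻¹ *
        ∑ n ∈ Finset.range N, Complex.exp (Complex.I * ((α * h N * n : ℝ) : ℂ)))
      atTop (nhds 0) := by
  have hbound : Tendsto (fun N : ℕ => π / (|α| * (|h N| * N))) atTop (nhds 0) :=
    tendsto_const_nhds.div_atTop (hinf.const_mul_atTop (abs_pos.mpr hα))
  have hsmall : ∀ᶠ N in atTop, |α * h N| ≤ π := by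
    have := (h0.const_mul α).abs
    rw [mul_zero, abs_zero] at this
    exact (this.eventually_lt_const pi_pos).mono fun _ hN => hN.le
  refine squeeze_zero_norm' ?_ hbound
  filter_upwards [hsmall, hinf.eventually_gt_atTop 0] with N hN hpos
  have hhN : h N ≠ 0 := by
    intro hzero
    simp [hzero] at hpos
  rw [norm_mul, norm_inv, Complex.norm_natCast]
  calc (N : ℝ)⁻¹ * ‖∑ n ∈ range N, Complex.exp (Complex.I * ((α * h N * n : ℝ) : ℂ))‖
      ≤ (N : ℝ)⁻¹ * (π / |α * h N|) := by
        gcongr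
        exact norm_sum_range_exp_I_mul_le (mul_ne_zero hα hhN) hN N
    _ = π / (|α| * (|h N| * N)) := by
        rw [abs_mul]
        field_simp

/-- If `h(N)` are nonzero reals with `h(N) → 0` and `|h(N)|·N → ∞`, then for
every nonzero real `α`, `(1/N) ∑_{n=0}^{N-1} e^{iαh(N)n} → 0`. -/
theorem stmt2 (h : ℕ → ℝ) (hne : ∀ N, h N ≠ 0)
    (h0 : Tendsto h atTop (nhds 0))
    (hinf : Tendsto (fun N : ℕ => |h N| * N) atTop atTop)
    (α : ℝ) (hα : α ≠ 0) :
    Tendsto (fun N : ℕ => (N : ℂ)⁻¹ *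
        ∑ n ∈ Finset.range N, Complex.exp (Complex.I * ((α * h N * n : ℝ) : ℂ)))
      atTop (nhds 0) :=
  stmt2_general h h0 hinf α hα
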